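/- Let Γ be a finite bipartite (simple) graph with at least 4 vertices. The following assertions are equivalent: (1) Γ has no induced subgraph isomorphic to the path P5 on 5 vertices, and Γ is prime; (2) Γ is critical; (3) Γ is a half graph. -/

import Mathlib

/-!
Formalization of 2-structures (Ehrenfeucht et al.), modules, primality,
criticality, the outside partition/graph, and (discrete) half graphs.
-/

universe u

variable {V : Type u}

/-- A 2-structure on the vertex type `V`: an equivalence relation on ordered
pairs of (distinct) vertices.  Only its values on off-diagonal pairs matter. -/
structure TwoStructure (V : Type u) where
  rel : V × V → V × V → Prop
  refl : ∀ p : V × V, p.1 ≠ p.2 → rel p p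
  symm : ∀ {p q : V × V}, rel p q → rel q p
  trans : ∀ {p q r : V × V}, rel p q → rel q r → rel p r

namespace TwoStructure

variable (σ : TwoStructure V)

/-- `M` is a module of the induced substructure `σ[W]`. -/
def IsModuleOn (W M : Set V) : Prop :=
  M ⊆ W ∧ ∀ x ∈ M, ∀ y ∈ M, ∀ v ∈ W \ M,
    σ.rel (x, v) (y, v) ∧ σ.rel (v, x) (v, y)

/-- The induced substructure `σ[W]` is prime: it has at least 3 vertices and
all of its modules are trivial. -/
def IsPrimeOn (W : Set V) : Prop :=
  3 ≤ W.encard ∧ ∀ M : Set V, σ.IsModuleOn W M → M = ∅ ∨ M = W ∨ ∃ v, M = {v}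

/-- The induced substructure `σ[W]` is `S`-critical: it is prime and removing
any vertex of `S` destroys primality. -/
def IsCriticalOn (W S : Set V) : Prop :=
  σ.IsPrimeOn W ∧ ∀ v ∈ S, ¬ σ.IsPrimeOn (W \ {v})

/-- `Ext_σ(X)`: the vertices `v ∉ X` with `σ[X ∪ {v}]` prime. -/
def extSet (X : Set V) : Set V := {v | v ∉ X ∧ σ.IsPrimeOn (X ∪ {v})}

/-- `⟨X⟩_σ`: the vertices `v ∉ X` such that `X` is a module of `σ[X ∪ {v}]`. -/
def innSet (X : Set V) : Set V := {v | v ∉ X ∧ σ.IsModuleOn (X ∪ {v}) X}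

/-- `X_σ(α)`: the vertices `v ∉ X` such that `{α, v}` is a module of `σ[X ∪ {v}]`. -/
def attSet (X : Set V) (α : V) : Set V :=
  {v | v ∉ X ∧ σ.IsModuleOn (X ∪ {v}) {α, v}}

/-- The outside partition `p_{(σ, X̄)}`. -/
def pBlocks (X : Set V) : Set (Set V) :=
  {σ.extSet X, σ.innSet X} ∪ (fun α => σ.attSet X α) '' X

/-- `⟨X⟩_σ^{(e,f)}` where the classes `e` and `f` are given by representative
pairs: vertices `v ∈ ⟨X⟩_σ` with `(v,α) ≡_σ e` and `(α,v) ≡_σ f` for all `α ∈ X`. -/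
def innSetC (X : Set V) (e f : V × V) : Set V :=
  {v | v ∈ σ.innSet X ∧ ∀ α ∈ X, σ.rel (v, α) e ∧ σ.rel (α, v) f}

/-- `X_σ^{(e,f)}(α)` where the classes `e` and `f` are given by representative
pairs. -/
def attSetC (X : Set V) (α : V) (e f : V × V) : Set V :=
  {v | v ∈ σ.attSet X α ∧ σ.rel (v, α) e ∧ σ.rel (α, v) f}

/-- The refined outside partition `q_{(σ, X̄)}`. -/
def qBlocks (X : Set V) : Set (Set V) :=
  {σ.extSet X} ∪ {B | ∃ e f : V × V, B = σ.innSetC X e f}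
    ∪ {B | ∃ α ∈ X, ∃ e f : V × V, B = σ.attSetC X α e f}

/-- `q^a`: the blocks of `q_{(σ, X̄)}` other than `Ext_σ(X)` that are not of the
symmetric form `⟨X⟩_σ^{(e,e)}` or `X_σ^{(e,e)}(α)`. -/
def qaBlocks (X : Set V) : Set (Set V) :=
  {B | B ∈ σ.qBlocks X ∧ B ≠ σ.extSet X ∧
    ¬ ∃ e : V × V, B = σ.innSetC X e e ∨ ∃ α ∈ X, B = σ.attSetC X α e e}

/-- The outside graph `Γ_{(σ, X̄)}`: on the vertex set `X̄ = Xᶜ`, two distinct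
vertices `v, w` are adjacent when `σ[X ∪ {v, w}]` is prime.  (Vertices of `X`
are not incident to any edge.) -/
def outsideGraph (X : Set V) : SimpleGraph V where
  Adj v w := v ∉ X ∧ w ∉ X ∧ v ≠ w ∧ σ.IsPrimeOn (X ∪ {v, w})
  symm := by
    constructor
    rintro v w ⟨hv, hw, hvw, hp⟩
    refine ⟨hw, hv, hvw.symm, ?_⟩
    rwa [Set.pair_comm w v]
  loopless := by
    constructor
    rintro v ⟨-, -, h, -⟩
    exact h rfl

/-- `C` is (the vertex set of) a connected component of the outside graph
`Γ_{(σ, X̄)}` (a component of the graph induced on `X̄`). -/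
def IsComponent (X : Set V) (C : Set V) : Prop :=
  ∃ v, v ∉ X ∧ C = {w | (σ.outsideGraph X).Reachable v w}

end TwoStructure

/-- `M` is a module of the subgraph of `G` induced on `W`. -/
def GraphIsModuleOn (G : SimpleGraph V) (W M : Set V) : Prop :=
  M ⊆ W ∧ ∀ v ∈ W \ M, (∀ x ∈ M, G.Adj v x) ∨ (∀ x ∈ M, ¬ G.Adj v x)

/-- The subgraph of `G` induced on `W` is prime. -/
def GraphIsPrimeOn (G : SimpleGraph V) (W : Set V) : Prop :=
  3 ≤ W.encard ∧ ∀ M : Set V, GraphIsModuleOn G W M → M = ∅ ∨ M = W ∨ ∃ v, M = {v}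

/-- The subgraph of `G` induced on `W` is critical: prime, and removing any of
its vertices destroys primality. -/
def GraphIsCriticalOn (G : SimpleGraph V) (W : Set V) : Prop :=
  GraphIsPrimeOn G W ∧ ∀ v ∈ W, ¬ GraphIsPrimeOn G (W \ {v})

/-- The subgraph of `G` induced on `S` contains an induced path `P₅` on five
vertices. -/
def HasInducedP5On (G : SimpleGraph V) (S : Set V) : Prop :=
  ∃ a b c d e : V, a ∈ S ∧ b ∈ S ∧ c ∈ S ∧ d ∈ S ∧ e ∈ S ∧
    a ≠ b ∧ a ≠ c ∧ a ≠ d ∧ a ≠ e ∧ b ≠ c ∧ b ≠ d ∧ b ≠ e ∧ c ≠ d ∧ c ≠ e ∧ d ≠ e ∧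
    G.Adj a b ∧ G.Adj b c ∧ G.Adj c d ∧ G.Adj d e ∧
    ¬ G.Adj a c ∧ ¬ G.Adj a d ∧ ¬ G.Adj a e ∧ ¬ G.Adj b d ∧ ¬ G.Adj b e ∧ ¬ G.Adj c e

/-- `r` is a linear order on the set `X`. -/
def IsLinearOrderOn (X : Set V) (r : V → V → Prop) : Prop :=
  (∀ x ∈ X, r x x) ∧
  (∀ x ∈ X, ∀ y ∈ X, r x y → r y x → x = y) ∧
  (∀ x ∈ X, ∀ y ∈ X, ∀ z ∈ X, r x y → r y z → r x z) ∧
  (∀ x ∈ X, ∀ y ∈ X, r x y ∨ r y x)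

/-- The linear order `r` on `X` is discrete: every element other than the
minimum has an immediate predecessor, and every element other than the maximum
has an immediate successor. -/
def IsDiscreteOn (X : Set V) (r : V → V → Prop) : Prop :=
  (∀ x ∈ X, ¬ (∀ y ∈ X, r x y) →
    ∃ p ∈ X, p ≠ x ∧ r p x ∧ ∀ z ∈ X, r p z → r z x → z = p ∨ z = x) ∧
  (∀ x ∈ X, ¬ (∀ y ∈ X, r y x) →
    ∃ s ∈ X, s ≠ x ∧ r x s ∧ ∀ z ∈ X, r x z → r z s → z = x ∨ z = s)

/-- `G` is the half graph determined by the bipartition `{X, Y}` of its vertex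
set, the linear order `r` on `X`, and the bijection `φ : X → Y`: the edges of
`G` are exactly the pairs `{x, φ x'}` with `x ≤ x'` in `r`. -/
def IsHalfGraphWith (G : SimpleGraph V) (X Y : Set V) (r : V → V → Prop)
    (φ : V → V) : Prop :=
  Disjoint X Y ∧ X ∪ Y = Set.univ ∧ IsLinearOrderOn X r ∧ Set.BijOn φ X Y ∧
    ∀ u v : V, G.Adj u v ↔ ∃ x ∈ X, ∃ x' ∈ X, r x x' ∧
      ((u = x ∧ v = φ x') ∨ (v = x ∧ u = φ x'))

/-- `G` is a half graph. -/
def IsHalfGraph (G : SimpleGraph V) : Prop :=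
  ∃ (X Y : Set V) (r : V → V → Prop) (φ : V → V), IsHalfGraphWith G X Y r φ

/-- `G` is a discrete half graph: a half graph whose defining linear order is
discrete. -/
def IsDiscreteHalfGraph (G : SimpleGraph V) : Prop :=
  ∃ (X Y : Set V) (r : V → V → Prop) (φ : V → V),
    IsHalfGraphWith G X Y r φ ∧ IsDiscreteOn X r

/-- `G` is bipartite: its vertex set splits into two independent sets. -/
def IsBipartite (G : SimpleGraph V) : Prop :=
  ∃ X Y : Set V, Disjoint X Y ∧ X ∪ Y = Set.univ ∧
    (∀ u ∈ X, ∀ v ∈ X, ¬ G.Adj u v) ∧ (∀ u ∈ Y, ∀ v ∈ Y, ¬ G.Adj u v)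

/-!
A half graph is prime: a nontrivial module meets both sides, and then the extreme vertices of the
order pull everything into it. Deleting a vertex `w` of a half graph leaves an isolated vertex
when `w` is extreme, and otherwise a pair of twins (the partners of `w` and of its neighbour in
the order), so half graphs are critical.

Conversely, a prime graph is connected, and in a connected triangle-free graph, walking from one
of two independent edges to the other runs into an induced `P₅`. Hence in a `P₅`-free prime bipartite graph the
neighbourhoods on each side form a chain, strictly so because a prime graph has no twins; sending
each vertex to its neighbour with the smallest neighbourhood exhibits a half graph.

Finally, `P₄` and `P₅` are prime, and by the theorem of Ehrenfeucht and Rozenberg a prime induced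
subgraph `A` of a prime graph with `|V ∖ A| ≥ 2` extends to a prime induced subgraph with two more
vertices. Starting from whichever of `P₄ ⊂ P₅` has a complement of odd size, this produces a prime
`G - v`, so a critical graph has no induced `P₅`.
-/

open Set

section Modules

variable {G : SimpleGraph V} {W M : Set V} {s v x y : V}

theorem exists_forall_rel_of_finite {r : V → V → Prop} {S : Set V} (hS : S.Finite)
    (hne : S.Nonempty) (htrans : ∀ a ∈ S, ∀ b ∈ S, ∀ c ∈ S, r a b → r b c → r a c)
    (htot : ∀ a ∈ S, ∀ b ∈ S, r a b ∨ r b a) : ∃ m ∈ S, ∀ z ∈ S, r m z := by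
  obtain ⟨m, hmS, hmin⟩ := hS.exists_minimalFor (fun x => {y ∈ S | r y x}) S hne
  refine ⟨m, hmS, fun z hz => (htot m hmS z hz).elim id fun hzm => ?_⟩
  have hsub : {y ∈ S | r y z} ⊆ {y ∈ S | r y m} :=
    fun y ⟨hy, hyz⟩ => ⟨hy, htrans y hy z hz m hmS hyz hzm⟩
  exact (hmin hz hsub ⟨hmS, (htot m hmS m hmS).elim id id⟩).2

theorem exists_mem_ne_ne_of_three_le_encard (h3 : 3 ≤ W.encard) (x y : V) :
    ∃ z ∈ W, z ≠ x ∧ z ≠ y := by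
  by_contra! h
  have hW : W ⊆ {x, y} := fun z hz => by
    by_cases hzx : z = x
    · exact Or.inl hzx
    · exact Or.inr (h z hz hzx)
  have := h3.trans ((encard_le_encard hW).trans (encard_insert_le _ _))
  rw [encard_singleton] at this
  exact absurd this (by norm_num)

theorem GraphIsModuleOn.adj_iff (hM : GraphIsModuleOn G W M) (hs : s ∈ W) (hsM : s ∉ M)
    (hx : x ∈ M) (hy : y ∈ M) : G.Adj s x ↔ G.Adj s y := by
  rcases hM.2 s ⟨hs, hsM⟩ with h | h
  · exact iff_of_true (h x hx) (h y hy)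
  · exact iff_of_false (h x hx) (h y hy)

theorem GraphIsModuleOn.mem_of_adj_of_not_adj (hM : GraphIsModuleOn G W M) (hx : x ∈ M)
    (hy : y ∈ M) (hs : s ∈ W) (hsx : G.Adj s x) (hsy : ¬ G.Adj s y) : s ∈ M :=
  by_contra fun hsM => hsy ((hM.adj_iff hs hsM hx hy).mp hsx)

theorem graphIsModuleOn_of_adj_iff (hMW : M ⊆ W)
    (h : ∀ s ∈ W, s ∉ M → ∀ x ∈ M, ∀ y ∈ M, (G.Adj s x ↔ G.Adj s y)) :
    GraphIsModuleOn G W M := by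
  refine ⟨hMW, fun s ⟨hs, hsM⟩ => ?_⟩
  by_cases hex : ∃ x ∈ M, G.Adj s x
  · obtain ⟨x, hx, hsx⟩ := hex
    exact Or.inl fun y hy => (h s hs hsM x hx y hy).mp hsx
  · push Not at hex
    exact Or.inr hex

theorem graphIsModuleOn_pair (hx : x ∈ W) (hy : y ∈ W)
    (h : ∀ s ∈ W, s ≠ x → s ≠ y → (G.Adj s x ↔ G.Adj s y)) :
    GraphIsModuleOn G W {x, y} := by
  refine graphIsModuleOn_of_adj_iff (insert_subset hx (singleton_subset_iff.mpr hy)) ?_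
  intro s hs hsM
  simp only [mem_insert_iff, mem_singleton_iff, not_or] at hsM
  have hxy := h s hs hsM.1 hsM.2
  rintro _ (rfl | rfl) _ (rfl | rfl) <;> simp [hxy]

theorem GraphIsPrimeOn.subset_of_module (hP : GraphIsPrimeOn G W) (hM : GraphIsModuleOn G W M)
    (hMn : M.Nontrivial) : W ⊆ M := by
  rcases hP.2 M hM with rfl | rfl | ⟨v, rfl⟩
  · exact absurd hMn not_nontrivial_empty
  · exact subset_rfl
  · exact absurd hMn not_nontrivial_singleton

theorem graphIsPrimeOn_of_subset_of_module (h3 : 3 ≤ W.encard)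
    (h : ∀ M, GraphIsModuleOn G W M → M.Nontrivial → W ⊆ M) : GraphIsPrimeOn G W := by
  refine ⟨h3, fun M hM => ?_⟩
  rcases M.subsingleton_or_nontrivial with hs | hn
  · rcases hs.eq_empty_or_singleton with h | h
    · exact Or.inl h
    · exact Or.inr (Or.inr h)
  · exact Or.inr (Or.inl (hM.1.antisymm (h M hM hn)))

theorem exists_module_of_not_graphIsPrimeOn (h3 : 3 ≤ W.encard) (h : ¬ GraphIsPrimeOn G W) :
    ∃ M, GraphIsModuleOn G W M ∧ M.Nontrivial ∧ ∃ z ∈ W, z ∉ M := by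
  by_contra! hall
  exact h (graphIsPrimeOn_of_subset_of_module h3 hall)

theorem GraphIsPrimeOn.not_graphIsModuleOn_pair (hP : GraphIsPrimeOn G W) (hxy : x ≠ y) :
    ¬ GraphIsModuleOn G W {x, y} := fun hM => by
  obtain ⟨z, hz, hzx, hzy⟩ := exists_mem_ne_ne_of_three_le_encard hP.1 x y
  have := hP.subset_of_module hM (nontrivial_pair hxy) hz
  simp [hzx, hzy] at this

theorem not_graphIsPrimeOn_of_isolated (h3 : 3 ≤ W.encard) (hv : v ∈ W)
    (hiso : ∀ x ∈ W, ¬ G.Adj v x) : ¬ GraphIsPrimeOn G W := fun hP => by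
  obtain ⟨a, ha, hav, -⟩ := exists_mem_ne_ne_of_three_le_encard h3 v v
  obtain ⟨b, hb, hbv, hba⟩ := exists_mem_ne_ne_of_three_le_encard h3 v a
  have hM : GraphIsModuleOn G W (W \ {v}) := by
    refine ⟨sdiff_subset, fun s ⟨hs, hsM⟩ => Or.inr fun x hx => ?_⟩
    rw [show s = v by simpa [hs] using hsM]
    exact hiso x hx.1
  exact (hP.subset_of_module hM ⟨a, ⟨ha, hav⟩, b, ⟨hb, hbv⟩, hba.symm⟩ hv).2 rfl

theorem GraphIsPrimeOn.exists_adj (hG : GraphIsPrimeOn G univ) (v : V) : ∃ w, G.Adj v w := by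
  by_contra! h
  exact not_graphIsPrimeOn_of_isolated hG.1 (mem_univ v) (fun x _ => h x) hG

theorem GraphIsPrimeOn.nontrivial (hP : GraphIsPrimeOn G W) : W.Nontrivial :=
  one_lt_encard_iff_nontrivial.mp (lt_of_lt_of_le (by norm_num) hP.1)

theorem GraphIsPrimeOn.connected (hG : GraphIsPrimeOn G univ) : G.Connected := by
  obtain ⟨u₀, -⟩ := hG.nontrivial.nonempty
  refine (SimpleGraph.connected_iff G).mpr ⟨fun u v => ?_, ⟨u₀⟩⟩
  have hM : GraphIsModuleOn G univ {w | G.Reachable u w} := ⟨subset_univ _,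
    fun s ⟨_, hs⟩ => Or.inr fun x hx hsx => hs (hx.trans hsx.symm.reachable)⟩
  obtain ⟨w, huw⟩ := hG.exists_adj u
  exact hG.subset_of_module hM ⟨u, .refl u, w, huw.reachable, huw.ne⟩ (mem_univ v)

theorem GraphIsPrimeOn.neighborSet_injective (hG : GraphIsPrimeOn G univ) :
    Function.Injective G.neighborSet := fun u v huv => by
  by_contra hne
  refine hG.not_graphIsModuleOn_pair hne
    (graphIsModuleOn_pair (mem_univ u) (mem_univ v) fun s _ _ _ => ?_)
  rw [G.adj_comm s u, G.adj_comm s v]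
  exact Set.ext_iff.mp huv s

end Modules

section Extension

variable {G : SimpleGraph V} {A M W : Set V} {a u u' v v₀ w₀ x y z α β : V}

def IsUniformOn (G : SimpleGraph V) (A : Set V) (v : V) : Prop :=
  (∀ a ∈ A, G.Adj v a) ∨ (∀ a ∈ A, ¬ G.Adj v a)

-- `{α, v}` is a module of `A ∪ {v}`
def IsTwinOver (G : SimpleGraph V) (A : Set V) (α v : V) : Prop :=
  ∀ b ∈ A, b ≠ α → (G.Adj b v ↔ G.Adj b α)

theorem IsUniformOn.adj_iff (hU : IsUniformOn G A v) (hx : x ∈ A) (hy : y ∈ A) :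
    G.Adj v x ↔ G.Adj v y := by
  rcases hU with h | h
  · exact iff_of_true (h x hx) (h y hy)
  · exact iff_of_false (h x hx) (h y hy)

theorem IsUniformOn.mono {B : Set V} (hU : IsUniformOn G B v) (hAB : A ⊆ B) :
    IsUniformOn G A v :=
  hU.imp (fun h a ha => h a (hAB ha)) (fun h a ha => h a (hAB ha))

theorem IsTwinOver.mono {B : Set V} (hT : IsTwinOver G B α v) (hAB : A ⊆ B) :
    IsTwinOver G A α v :=
  fun b hb hbα => hT b (hAB hb) hbα

theorem IsUniformOn.of_adj_iff (hU : IsUniformOn G A z) (h : ∀ b ∈ A, G.Adj b z ↔ G.Adj b u) :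
    IsUniformOn G A u :=
  hU.imp (fun hz b hb => ((h b hb).mp (hz b hb).symm).symm)
    (fun hz b hb hub => hz b hb ((h b hb).mpr hub.symm).symm)

theorem GraphIsModuleOn.isUniformOn (hM : GraphIsModuleOn G W M) (hAM : A ⊆ M) (hv : v ∈ W)
    (hvM : v ∉ M) : IsUniformOn G A v :=
  (hM.2 v ⟨hv, hvM⟩).imp (fun h a ha => h a (hAM ha)) (fun h a ha => h a (hAM ha))

theorem GraphIsModuleOn.isTwinOver (hM : GraphIsModuleOn G W M) (hAW : A ⊆ W) (hβ : β ∈ M)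
    (hMA : ∀ c ∈ A, c ∈ M → c = β) (hv : v ∈ M) : IsTwinOver G A β v :=
  fun b hb hbβ => hM.adj_iff (hAW hb) (fun hbM => hbβ (hMA b hb hbM)) hv hβ

theorem GraphIsPrimeOn.subset_or_subsingleton_inter (hA : GraphIsPrimeOn G A) (hAW : A ⊆ W)
    (hM : GraphIsModuleOn G W M) :
    A ⊆ M ∨ ∀ c ∈ A, ∀ d ∈ A, c ∈ M → d ∈ M → c = d := by
  refine or_iff_not_imp_right.mpr fun h => ?_
  push Not at h
  obtain ⟨c, hc, d, hd, hcM, hdM, hcd⟩ := h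
  have hMA : GraphIsModuleOn G A (M ∩ A) := by
    refine graphIsModuleOn_of_adj_iff inter_subset_right fun s hs hsM x hx y hy => ?_
    exact hM.adj_iff (hAW hs) (fun h => hsM ⟨h, hs⟩) hx.1 hy.1
  exact fun a ha => (hA.subset_of_module hMA ⟨c, ⟨hcM, hc⟩, d, ⟨hdM, hd⟩, hcd⟩ ha).1

theorem IsTwinOver.not_isUniformOn (hA : GraphIsPrimeOn G A) (hα : α ∈ A)
    (hT : IsTwinOver G A α v) : ¬ IsUniformOn G A v := fun hU => by
  have hM : GraphIsModuleOn G A (A \ {α}) := by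
    refine graphIsModuleOn_of_adj_iff sdiff_subset fun s hs hsM x hx y hy => ?_
    obtain rfl : s = α := by simpa [hs] using hsM
    rw [G.adj_comm s x, G.adj_comm s y, ← hT x hx.1 hx.2, ← hT y hy.1 hy.2, G.adj_comm x v,
      G.adj_comm y v]
    exact hU.adj_iff hx.1 hy.1
  obtain ⟨a, ha, haα, -⟩ := exists_mem_ne_ne_of_three_le_encard hA.1 α α
  obtain ⟨b, hb, hbα, hba⟩ := exists_mem_ne_ne_of_three_le_encard hA.1 α a
  exact (hA.subset_of_module hM ⟨a, ⟨ha, haα⟩, b, ⟨hb, hbα⟩, hba.symm⟩ hα).2 rfl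

theorem IsTwinOver.eq (hA : GraphIsPrimeOn G A) (hα : α ∈ A) (hβ : β ∈ A)
    (hTα : IsTwinOver G A α v) (hTβ : IsTwinOver G A β v) : α = β := by
  by_contra hne
  refine hA.not_graphIsModuleOn_pair hne (graphIsModuleOn_pair hα hβ fun s hs hsα hsβ => ?_)
  exact (hTα s hs hsα).symm.trans (hTβ s hs hsβ)

theorem not_isUniformOn_of_graphIsPrimeOn (hv : v ∉ A) (hP : GraphIsPrimeOn G (A ∪ {v})) :
    ¬ IsUniformOn G A v := fun hU => by
  have hM : GraphIsModuleOn G (A ∪ {v}) A := by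
    refine ⟨subset_union_left, fun s ⟨hs, hsA⟩ => ?_⟩
    obtain rfl : s = v := by simpa [hsA] using hs
    exact hU
  obtain ⟨a, ha, hav, -⟩ := exists_mem_ne_ne_of_three_le_encard hP.1 v v
  obtain ⟨b, hb, hbv, hba⟩ := exists_mem_ne_ne_of_three_le_encard hP.1 v a
  have hAn : A.Nontrivial :=
    ⟨a, by simpa [hav] using ha, b, by simpa [hbv] using hb, hba.symm⟩
  exact hv (hP.subset_of_module hM hAn (mem_union_right A rfl))

theorem not_isTwinOver_of_graphIsPrimeOn (hv : v ∉ A) (hα : α ∈ A)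
    (hP : GraphIsPrimeOn G (A ∪ {v})) : ¬ IsTwinOver G A α v := fun hT => by
  refine hP.not_graphIsModuleOn_pair (fun h : α = v => hv (h ▸ hα))
    (graphIsModuleOn_pair (mem_union_left _ hα) (mem_union_right A rfl) fun s hs hsα hsv => ?_)
  exact (hT s (by simpa [hsv] using hs) hsα).symm

theorem isUniformOn_or_isTwinOver_of_not_graphIsPrimeOn (hA : GraphIsPrimeOn G A) (hv : v ∉ A)
    (hnp : ¬ GraphIsPrimeOn G (A ∪ {v})) :
    IsUniformOn G A v ∨ ∃ α ∈ A, IsTwinOver G A α v := by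
  obtain ⟨M, hM, hMn, z, hz, hzM⟩ :=
    exists_module_of_not_graphIsPrimeOn (hA.1.trans (encard_le_encard subset_union_left)) hnp
  rcases hA.subset_or_subsingleton_inter subset_union_left hM with hAM | hMA
  · obtain rfl : z = v := hz.resolve_left fun h => hzM (hAM h)
    exact Or.inl (hM.isUniformOn hAM hz hzM)
  · -- `M` meets `A` in at most one vertex, so it consists of `v` and some `α ∈ A`
    obtain ⟨α, hαM, hαv⟩ := hMn.exists_ne v
    have hαA : α ∈ A := by simpa [hαv] using hM.1 hαM
    have hvM : v ∈ M := by
      obtain ⟨c, hcM, hcα⟩ := hMn.exists_ne α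
      by_contra hvM
      have hcA : c ∈ A := (hM.1 hcM).resolve_right fun h : c = v => hvM (h ▸ hcM)
      exact hcα (hMA c hcA α hαA hcM hαM)
    exact Or.inr ⟨α, hαA, hM.isTwinOver subset_union_left hαM
      (fun c hc hcM => hMA c hc α hαA hcM hαM) hvM⟩

theorem graphIsPrimeOn_union_singleton (hA : GraphIsPrimeOn G A) (hv : v ∉ A)
    (hU : ¬ IsUniformOn G A v) (hT : ∀ α ∈ A, ¬ IsTwinOver G A α v) :
    GraphIsPrimeOn G (A ∪ {v}) := by
  by_contra hnp
  rcases isUniformOn_or_isTwinOver_of_not_graphIsPrimeOn hA hv hnp with h | ⟨α, hα, h⟩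
  exacts [hU h, hT α hα h]

theorem adj_iff_of_isTwinOver (hA : GraphIsPrimeOn G A) (hα : α ∈ A) (hx : x ∉ A)
    (hz : z ∉ A) (hTx : IsTwinOver G A α x) (hTz : ¬ IsTwinOver G A α z)
    (hnp : ¬ GraphIsPrimeOn G (A ∪ {z, x})) : G.Adj z x ↔ G.Adj z α := by
  have hAW : A ⊆ A ∪ {z, x} := subset_union_left
  have hxW : x ∈ A ∪ {z, x} := by simp
  have hzW : z ∈ A ∪ {z, x} := by simp
  obtain ⟨M, hM, hMn, w, hw, hwM⟩ :=
    exists_module_of_not_graphIsPrimeOn (hA.1.trans (encard_le_encard hAW)) hnp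
  rcases hA.subset_or_subsingleton_inter hAW hM with hAM | hMA
  · have hxM : x ∈ M := by_contra fun hxM =>
      hTx.not_isUniformOn hA hα (hM.isUniformOn hAM hxW hxM)
    have hzM : z ∉ M := by
      rcases hw with h | rfl | rfl
      exacts [absurd (hAM h) hwM, hwM, absurd hxM hwM]
    exact hM.adj_iff hzW hzM hxM (hAM hα)
  have twin_of_mem : ∀ β ∈ A, β ∈ M → ∀ u ∈ M, IsTwinOver G A β u :=
    fun β hβ hβM u hu => hM.isTwinOver hAW hβM (fun c hc hcM => hMA c hc β hβ hcM hβM) hu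
  by_cases hxM : x ∈ M
  · by_cases hzM : z ∈ M
    · refine absurd (fun b hb hbα => ?_) hTz
      by_cases hbM : b ∈ M
      · exact absurd ((twin_of_mem b hb hbM x hxM).eq hA hb hα hTx) hbα
      · exact (hM.adj_iff (hAW hb) hbM hzM hxM).trans (hTx b hb hbα)
    by_cases hαM : α ∈ M
    · exact hM.adj_iff hzW hzM hxM hαM
    obtain ⟨β, hβM, hβx⟩ := hMn.exists_ne x
    have hβA : β ∈ A := by
      rcases hM.1 hβM with h | rfl | rfl
      exacts [h, absurd hβM hzM, absurd rfl hβx]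
    exact absurd (((twin_of_mem β hβA hβM x hxM).eq hA hβA hα hTx) ▸ hβM) hαM
  · -- `M` consists of `z` and a single `β ∈ A`, and `z` is a twin of `β ≠ α`
    obtain ⟨β, hβM, hβz⟩ := hMn.exists_ne z
    have hβA : β ∈ A := by
      rcases hM.1 hβM with h | rfl | rfl
      exacts [h, absurd rfl hβz, absurd hβM hxM]
    have hzM : z ∈ M := by
      by_contra hzM
      obtain ⟨c, hcM, hcβ⟩ := hMn.exists_ne β
      have hcA : c ∈ A := by
        rcases hM.1 hcM with h | rfl | rfl
        exacts [h, absurd hcM hzM, absurd hcM hxM]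
      exact hcβ (hMA c hcA β hβA hcM hβM)
    have hTz' := twin_of_mem β hβA hβM z hzM
    have hβα : β ≠ α := fun h => hTz (h ▸ hTz')
    calc G.Adj z x ↔ G.Adj x β := by rw [G.adj_comm]; exact hM.adj_iff hxW hxM hzM hβM
      _ ↔ G.Adj β α := by rw [G.adj_comm]; exact hTx β hβA hβα
      _ ↔ G.Adj z α := by
        rw [G.adj_comm β α, G.adj_comm z α]
        exact (hTz' α hα hβα.symm).symm

theorem adj_iff_of_isUniformOn (hA : GraphIsPrimeOn G A) (hz : z ∉ A) (hu : u ∉ A)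
    (hU : IsUniformOn G A z) (hP : GraphIsPrimeOn G (A ∪ {u}))
    (hnp : ¬ GraphIsPrimeOn G (A ∪ {u, z})) (ha : a ∈ A) : G.Adj z u ↔ G.Adj z a := by
  have hzu : z ≠ u := by
    rintro rfl
    exact not_isUniformOn_of_graphIsPrimeOn hu hP hU
  rw [← singleton_union, ← union_assoc] at hnp
  rcases isUniformOn_or_isTwinOver_of_not_graphIsPrimeOn hP (by simp [hz, hzu]) hnp with
    hU' | ⟨β, hβ | rfl, hT⟩
  · exact hU'.adj_iff (mem_union_right A rfl) (mem_union_left _ ha)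
  · exact absurd hU ((hT.mono subset_union_left).not_isUniformOn hA hβ)
  · refine absurd (hU.of_adj_iff fun b hb => hT b (mem_union_left _ hb) ?_)
      (not_isUniformOn_of_graphIsPrimeOn hu hP)
    exact fun h => hu (h ▸ hb)

theorem adj_iff_of_graphIsPrimeOn_union_singleton (hu : u ∉ A) (hu' : u' ∉ A) (huu' : u ≠ u')
    (hP : GraphIsPrimeOn G (A ∪ {u})) (hP' : GraphIsPrimeOn G (A ∪ {u'}))
    (hnp : ¬ GraphIsPrimeOn G (A ∪ {u, u'})) (ha : a ∈ A) : G.Adj a u' ↔ G.Adj a u := by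
  rw [← singleton_union, ← union_assoc] at hnp
  rcases isUniformOn_or_isTwinOver_of_not_graphIsPrimeOn hP (by simp [hu', huu'.symm]) hnp with
    hU | ⟨β, hβ | rfl, hT⟩
  · exact absurd (hU.mono subset_union_left) (not_isUniformOn_of_graphIsPrimeOn hu' hP')
  · exact absurd (hT.mono subset_union_left) (not_isTwinOver_of_graphIsPrimeOn hu' hβ hP')
  · exact hT a (mem_union_left _ ha) fun h => hu (h ▸ ha)

theorem not_isTwinOver_of_forall_not_graphIsPrimeOn (hG : GraphIsPrimeOn G univ)
    (hA : GraphIsPrimeOn G A)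
    (hno : ∀ v w, v ∉ A → w ∉ A → v ≠ w → ¬ GraphIsPrimeOn G (A ∪ {v, w}))
    (hα : α ∈ A) (hu : u ∉ A) : ¬ IsTwinOver G A α u := fun hTu => by
  -- `α` together with all its twins outside `A` would be a nontrivial module
  set C := insert α {z | z ∉ A ∧ IsTwinOver G A α z}
  have key : ∀ s ∉ C, ∀ x ∈ C, G.Adj s x ↔ G.Adj s α := by
    intro s hs x hx
    have hsα : s ≠ α := fun h => hs (h ▸ mem_insert _ _)
    rcases hx with rfl | ⟨hxA, hTx⟩
    · rfl
    by_cases hsA : s ∈ A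
    · exact hTx s hsA hsα
    have hTs : ¬ IsTwinOver G A α s := fun hT => hs (mem_insert_of_mem _ ⟨hsA, hT⟩)
    have hsx : s ≠ x := fun h => hTs (h ▸ hTx)
    exact adj_iff_of_isTwinOver hA hα hxA hsA hTx hTs (hno s x hsA hxA hsx)
  have hC : GraphIsModuleOn G univ C := graphIsModuleOn_of_adj_iff (subset_univ _)
    fun s _ hs x hx y hy => (key s hs x hx).trans (key s hs y hy).symm
  have hCn : C.Nontrivial :=
    ⟨α, mem_insert _ _, u, mem_insert_of_mem _ ⟨hu, hTu⟩, fun h => hu (h ▸ hα)⟩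
  obtain ⟨a, ha, haα, -⟩ := exists_mem_ne_ne_of_three_le_encard hA.1 α α
  rcases hG.subset_of_module hC hCn (mem_univ a) with h | ⟨haA, -⟩
  exacts [haα h, haA ha]

theorem exists_graphIsPrimeOn_union_pair (hG : GraphIsPrimeOn G univ) (hA : GraphIsPrimeOn G A)
    (hv₀ : v₀ ∉ A) (hw₀ : w₀ ∉ A) (hvw₀ : v₀ ≠ w₀) :
    ∃ v w, v ∉ A ∧ w ∉ A ∧ v ≠ w ∧ GraphIsPrimeOn G (A ∪ {v, w}) := by
  by_contra! hno
  have hUni : ∀ z ∉ A, ¬ GraphIsPrimeOn G (A ∪ {z}) → IsUniformOn G A z := fun z hz hnp =>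
    (isUniformOn_or_isTwinOver_of_not_graphIsPrimeOn hA hz hnp).resolve_right
      fun ⟨_, hα, hT⟩ => not_isTwinOver_of_forall_not_graphIsPrimeOn hG hA hno hα hz hT
  set E := {u | u ∉ A ∧ GraphIsPrimeOn G (A ∪ {u})}
  obtain ⟨a₀, ha₀⟩ := hA.nontrivial.nonempty
  -- a vertex outside `A ∪ E` is uniform on `A`, hence on `A ∪ E`; so `A ∪ E` is everything,
  -- and then `E` itself is a nontrivial module
  have hAE : GraphIsModuleOn G univ (A ∪ E) := by
    refine graphIsModuleOn_of_adj_iff (subset_univ _) fun z _ hz => ?_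
    have hzA : z ∉ A := fun h => hz (Or.inl h)
    have hU := hUni z hzA fun h => hz (Or.inr ⟨hzA, h⟩)
    have key : ∀ x ∈ A ∪ E, G.Adj z x ↔ G.Adj z a₀ := by
      rintro x (hx | hx)
      · exact hU.adj_iff hx ha₀
      · have hxz : x ≠ z := fun h => hz (Or.inr (h ▸ hx))
        exact adj_iff_of_isUniformOn hA hzA hx.1 hU hx.2 (hno x z hx.1 hzA hxz) ha₀
    exact fun x hx y hy => (key x hx).trans (key y hy).symm
  have hE_of_notMem : ∀ v ∉ A, v ∈ E := fun v hv =>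
    (hG.subset_of_module hAE (hA.nontrivial.mono subset_union_left) (mem_univ v)).resolve_left hv
  have hE : GraphIsModuleOn G univ E := by
    refine graphIsModuleOn_of_adj_iff (subset_univ _) fun a _ ha x hx y hy => ?_
    have haA : a ∈ A := by_contra fun h => ha (hE_of_notMem a h)
    rcases eq_or_ne x y with rfl | hxy
    · rfl
    exact (adj_iff_of_graphIsPrimeOn_union_singleton hx.1 hy.1 hxy hx.2 hy.2
      (hno x y hx.1 hy.1 hxy) haA).symm
  have hEn : E.Nontrivial :=
    ⟨v₀, hE_of_notMem v₀ hv₀, w₀, hE_of_notMem w₀ hw₀, hvw₀⟩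
  exact (hG.subset_of_module hE hEn (mem_univ a₀)).1 ha₀

theorem exists_graphIsPrimeOn_delete_of_odd [Finite V] (hG : GraphIsPrimeOn G univ)
    (hA : GraphIsPrimeOn G A) (hodd : Odd Aᶜ.ncard) : ∃ w, GraphIsPrimeOn G (univ \ {w}) := by
  induction hn : Aᶜ.ncard using Nat.strong_induction_on generalizing A with
  | _ n ih =>
  rw [hn] at hodd
  rcases eq_or_ne n 1 with rfl | hn1
  · obtain ⟨w, hw⟩ := ncard_eq_one.mp hn
    refine ⟨w, ?_⟩
    rwa [← compl_eq_univ_sdiff, ← hw, compl_compl]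
  have h1 : 1 < Aᶜ.ncard := by
    obtain ⟨k, rfl⟩ := hodd
    omega
  obtain ⟨v₀, hv₀, w₀, hw₀, hvw₀⟩ := one_lt_ncard_iff_nontrivial.mp h1
  obtain ⟨v, w, hv, hw, hvw, hP⟩ := exists_graphIsPrimeOn_union_pair hG hA hv₀ hw₀ hvw₀
  have hcard : (A ∪ {v, w})ᶜ.ncard = n - 2 := by
    rw [compl_union, ← sdiff_eq, ncard_sdiff (insert_subset hv (singleton_subset_iff.mpr hw)),
      ncard_pair hvw, hn]
  refine ih (n - 2) (by omega) hP ?_ hcard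
  obtain ⟨k, rfl⟩ := hodd
  exact ⟨k - 1, by omega⟩

theorem GraphIsCriticalOn.not_graphIsPrimeOn_union_singleton [Finite V]
    (hcrit : GraphIsCriticalOn G univ) (hA : GraphIsPrimeOn G A) (hv : v ∉ A) :
    ¬ GraphIsPrimeOn G (A ∪ {v}) := fun hP => by
  have hcard : (A ∪ {v})ᶜ.ncard + 1 = Aᶜ.ncard := by
    rw [compl_union, ← sdiff_eq, ncard_sdiff_singleton_add_one hv]
  obtain ⟨w, hw⟩ : ∃ w, GraphIsPrimeOn G (univ \ {w}) := by
    rcases Nat.even_or_odd Aᶜ.ncard with he | ho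
    · rw [← hcard, Nat.even_add_one, Nat.not_even_iff_odd] at he
      exact exists_graphIsPrimeOn_delete_of_odd hcrit.1 hP he
    · exact exists_graphIsPrimeOn_delete_of_odd hcrit.1 hA ho
  exact hcrit.2 w (mem_univ w) hw

end Extension

section Paths

variable {G : SimpleGraph V} {a b c d e : V}

theorem graphIsPrimeOn_path4 (hab : G.Adj a b) (hbc : G.Adj b c) (hcd : G.Adj c d)
    (hac : ¬ G.Adj a c) (had : ¬ G.Adj a d) (hbd : ¬ G.Adj b d) :
    GraphIsPrimeOn G {a, b, c, d} := by
  have h3 : 3 ≤ ({a, b, c, d} : Set V).encard := by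
    have hbd' : b ≠ d := fun h => had (h ▸ hab)
    calc (3 : ℕ∞) = ({b, c, d} : Set V).encard :=
          (encard_eq_three.mpr ⟨b, c, d, hbc.ne, hbd', hcd.ne, rfl⟩).symm
      _ ≤ _ := encard_le_encard (subset_insert _ _)
  refine graphIsPrimeOn_of_subset_of_module h3 fun M hM hMn => ?_
  have pull : ∀ {s x y}, s ∈ ({a, b, c, d} : Set V) → x ∈ M → y ∈ M → G.Adj s x →
      ¬ G.Adj s y → s ∈ M := fun hs hx hy => hM.mem_of_adj_of_not_adj hx hy hs
  have hA : b ∈ M → c ∈ M → a ∈ M :=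
    fun hb hc => pull (by simp) hb hc hab hac
  have hA' : b ∈ M → d ∈ M → a ∈ M :=
    fun hb hd => pull (by simp) hb hd hab had
  have hB : a ∈ M → d ∈ M → b ∈ M :=
    fun ha hd => pull (by simp) ha hd hab.symm hbd
  have hB' : c ∈ M → d ∈ M → b ∈ M :=
    fun hc hd => pull (by simp) hc hd hbc hbd
  have hC : b ∈ M → a ∈ M → c ∈ M :=
    fun hb ha => pull (by simp) hb ha hbc.symm (hac ·.symm)
  have hD : c ∈ M → a ∈ M → d ∈ M :=
    fun hc ha => pull (by simp) hc ha hcd.symm (had ·.symm)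
  obtain ⟨x, hx, y, hy, hxy⟩ := hMn
  have hx' := hM.1 hx
  have hy' := hM.1 hy
  simp only [mem_insert_iff, mem_singleton_iff] at hx' hy'
  have hab' : a ∈ M ∧ b ∈ M := by
    rcases hx' with rfl | rfl | rfl | rfl <;> rcases hy' with rfl | rfl | rfl | rfl <;>
      first | exact absurd rfl hxy | constructor <;> solve_by_elim (maxDepth := 8)
  have hc := hC hab'.2 hab'.1
  simp only [insert_subset_iff, singleton_subset_iff]
  exact ⟨hab'.1, hab'.2, hc, hD hc hab'.1⟩

theorem graphIsPrimeOn_path5 (hab : G.Adj a b) (hbc : G.Adj b c) (hcd : G.Adj c d)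
    (hde : G.Adj d e) (hac : ¬ G.Adj a c) (had : ¬ G.Adj a d) (hae : ¬ G.Adj a e)
    (hbd : ¬ G.Adj b d) (hbe : ¬ G.Adj b e) (hce : ¬ G.Adj c e)
    (he : e ∉ ({a, b, c, d} : Set V)) : GraphIsPrimeOn G ({a, b, c, d} ∪ {e}) := by
  refine graphIsPrimeOn_union_singleton (graphIsPrimeOn_path4 hab hbc hcd hac had hbd) he ?_ ?_
  · rintro (h | h)
    exacts [hae (h a (by simp)).symm, h d (by simp) hde.symm]
  · intro α hα hT
    simp only [mem_insert_iff, mem_singleton_iff] at hα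
    rcases hα with rfl | rfl | rfl | rfl
    exacts [hbe ((hT b (by simp) hab.ne.symm).mpr hab.symm), hae ((hT a (by simp) hab.ne).mpr hab),
      hbe ((hT b (by simp) hbc.ne).mpr hbc), hce ((hT c (by simp) hcd.ne).mpr hcd)]

theorem GraphIsCriticalOn.not_hasInducedP5On [Finite V] (hcrit : GraphIsCriticalOn G univ) :
    ¬ HasInducedP5On G univ := by
  rintro ⟨a, b, c, d, e, -, -, -, -, -, -, -, -, hae', -, -, hbe', -, hce', hde',
    hab, hbc, hcd, hde, hac, had, hae, hbd, hbe, hce⟩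
  have he : e ∉ ({a, b, c, d} : Set V) := by simp [hae'.symm, hbe'.symm, hce'.symm, hde'.symm]
  exact hcrit.not_graphIsPrimeOn_union_singleton (graphIsPrimeOn_path4 hab hbc hcd hac had hbd) he
    (graphIsPrimeOn_path5 hab hbc hcd hde hac had hae hbd hbe hce he)

end Paths

section HalfGraphOfPrime

variable {G : SimpleGraph V} {a b c d e u u' : V}

def HasInducedTwoK2 (G : SimpleGraph V) : Prop :=
  ∃ a b c d : V, G.Adj a b ∧ G.Adj c d ∧
    ¬ G.Adj a c ∧ ¬ G.Adj a d ∧ ¬ G.Adj b c ∧ ¬ G.Adj b d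

theorem IsBipartite.not_adj_of_adj_of_adj (hbip : IsBipartite G) ⦃x y z : V⦄ (hxy : G.Adj x y)
    (hyz : G.Adj y z) : ¬ G.Adj x z := by
  obtain ⟨X, Y, -, hcov, hX, hY⟩ := hbip
  have hmem : ∀ w, w ∈ X ∪ Y := fun w => hcov ▸ mem_univ w
  intro hxz
  rcases hmem x with hx | hx <;> rcases hmem y with hy | hy <;> rcases hmem z with hz | hz <;>
    first
      | exact hX x hx y hy hxy | exact hX y hy z hz hyz | exact hX x hx z hz hxz
      | exact hY x hx y hy hxy | exact hY y hy z hz hyz | exact hY x hx z hz hxz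

theorem hasInducedP5On_univ (hab : G.Adj a b) (hbc : G.Adj b c) (hcd : G.Adj c d)
    (hde : G.Adj d e) (hac : ¬ G.Adj a c) (had : ¬ G.Adj a d) (hae : ¬ G.Adj a e)
    (hbd : ¬ G.Adj b d) (hbe : ¬ G.Adj b e) (hce : ¬ G.Adj c e) : HasInducedP5On G univ :=
  ⟨a, b, c, d, e, trivial, trivial, trivial, trivial, trivial, hab.ne,
    fun h => had (h ▸ hcd), fun h => hac (h ▸ hcd.symm), fun h => had (h ▸ hde.symm), hbc.ne,
    fun h => had (h ▸ hab), fun h => hae (h ▸ hab), hcd.ne, fun h => hbe (h ▸ hbc), hde.ne,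
    hab, hbc, hcd, hde, hac, had, hae, hbd, hbe, hce⟩

theorem hasInducedP5On_of_walk (htf : ∀ ⦃x y z⦄, G.Adj x y → G.Adj y z → ¬ G.Adj x z)
    {b c : V} (p : G.Walk b c) {a d : V} (hab : G.Adj a b) (hcd : G.Adj c d)
    (hac : ¬ G.Adj a c) (had : ¬ G.Adj a d) (hbc : ¬ G.Adj b c) (hbd : ¬ G.Adj b d) :
    HasInducedP5On G univ := by
  induction p generalizing a with
  | nil => exact absurd hcd hbd
  | @cons b x c hbx q ih =>
    -- either `a b x c d` or `a b x d c` is an induced path, or `bx, cd` is a closer induced `2K₂`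
    by_cases hxc : G.Adj x c
    · exact hasInducedP5On_univ hab hbx hxc hcd (htf hab hbx) hac had hbc hbd (htf hxc hcd)
    by_cases hxd : G.Adj x d
    · exact hasInducedP5On_univ hab hbx hxd hcd.symm (htf hab hbx) had hac hbd hbc
        (htf hxd hcd.symm)
    exact ih hbx hcd hbc hbd hxc hxd

theorem SimpleGraph.Connected.hasInducedP5On_of_hasInducedTwoK2 (hconn : G.Connected)
    (htf : ∀ ⦃x y z⦄, G.Adj x y → G.Adj y z → ¬ G.Adj x z) (h : HasInducedTwoK2 G) :
    HasInducedP5On G univ := by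
  obtain ⟨a, b, c, d, hab, hcd, hac, had, hbc, hbd⟩ := h
  exact hasInducedP5On_of_walk htf (hconn.preconnected b c).some hab hcd hac had hbc hbd

theorem neighborSet_subset_or_subset (h2K2 : ¬ HasInducedTwoK2 G) (huu' : ¬ G.Adj u u')
    (hN : ∀ z ∈ G.neighborSet u, ∀ z' ∈ G.neighborSet u', ¬ G.Adj z z') :
    G.neighborSet u ⊆ G.neighborSet u' ∨ G.neighborSet u' ⊆ G.neighborSet u := by
  by_contra! h
  obtain ⟨⟨z, hz, hz'⟩, ⟨z', hw, hw'⟩⟩ := And.imp not_subset.mp not_subset.mp h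
  exact h2K2 ⟨u, z, u', z', hz, hw, huu', hw', fun h => hz' h.symm, hN z hz z' hw⟩

theorem bijOn_of_injective_of_mapsTo [Finite V] {f : V → V} {X Y : Set V}
    (hf : Function.Injective f) (hXY : MapsTo f X Y) (hYX : MapsTo f Y X) : BijOn f X Y := by
  have hle : Y.ncard ≤ (f '' X).ncard :=
    (ncard_image_of_injective X hf).symm ▸ ncard_le_ncard_of_injOn f hYX hf.injOn
  exact ⟨hXY, hf.injOn, (eq_of_subset_of_ncard_le (image_subset_iff.mpr hXY) hle).symm.subset⟩

theorem neighborSet_subset_or_subset_of_mem {X Y : Set V} (h2K2 : ¬ HasInducedTwoK2 G)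
    (hcov : X ∪ Y = univ) (hX : ∀ u ∈ X, ∀ v ∈ X, ¬ G.Adj u v)
    (hY : ∀ u ∈ Y, ∀ v ∈ Y, ¬ G.Adj u v) (hu : u ∈ X) (hu' : u' ∈ X) :
    G.neighborSet u ⊆ G.neighborSet u' ∨ G.neighborSet u' ⊆ G.neighborSet u := by
  have hNY : ∀ {v}, v ∈ X → G.neighborSet v ⊆ Y := fun hv w hw =>
    ((hcov ▸ mem_univ w : w ∈ X ∪ Y)).resolve_left fun h => hX _ hv w h hw
  exact neighborSet_subset_or_subset h2K2 (hX u hu u' hu')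
    fun z hz z' hz' => hY z (hNY hu hz) z' (hNY hu' hz')

theorem GraphIsPrimeOn.exists_injective_adj_iff [Finite V] (hG : GraphIsPrimeOn G univ)
    (hnest : ∀ v, ∀ y ∈ G.neighborSet v, ∀ y' ∈ G.neighborSet v,
      G.neighborSet y ⊆ G.neighborSet y' ∨ G.neighborSet y' ⊆ G.neighborSet y) :
    ∃ φ : V → V, Function.Injective φ ∧
      ∀ v y, G.Adj v y ↔ G.neighborSet (φ v) ⊆ G.neighborSet y := by
  have hφ : ∀ v, ∃ m ∈ G.neighborSet v, ∀ y ∈ G.neighborSet v,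
      G.neighborSet m ⊆ G.neighborSet y := fun v =>
    exists_forall_rel_of_finite (toFinite _) (hG.exists_adj v)
      (fun _ _ _ _ _ _ => subset_trans) (hnest v)
  choose φ hφadj hφmin using hφ
  have hadj_iff : ∀ v y, G.Adj v y ↔ G.neighborSet (φ v) ⊆ G.neighborSet y :=
    fun v y => ⟨hφmin v y, fun h => (h (hφadj v).symm).symm⟩
  refine ⟨φ, fun v v' h => hG.neighborSet_injective (ext fun y => ?_), hadj_iff⟩
  rw [SimpleGraph.mem_neighborSet, SimpleGraph.mem_neighborSet, hadj_iff, hadj_iff, h]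

theorem isHalfGraph_of_graphIsPrimeOn [Finite V] (hG : GraphIsPrimeOn G univ)
    (hbip : IsBipartite G) (h2K2 : ¬ HasInducedTwoK2 G) : IsHalfGraph G := by
  obtain ⟨X, Y, hdis, hcov, hX, hY⟩ := hbip
  have hcov' : Y ∪ X = univ := union_comm Y X ▸ hcov
  have hmem : ∀ v, v ∈ X ∪ Y := fun v => hcov ▸ mem_univ v
  have hNX : ∀ v ∈ X, G.neighborSet v ⊆ Y := fun v hv w hw =>
    (hmem w).resolve_left fun h => hX v hv w h hw
  have hNY : ∀ v ∈ Y, G.neighborSet v ⊆ X := fun v hv w hw =>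
    (hmem w).resolve_right fun h => hY v hv w h hw
  obtain ⟨φ, hφinj, hadj_iff⟩ := hG.exists_injective_adj_iff fun v y hy y' hy' =>
    (hmem v).elim
      (fun hv => neighborSet_subset_or_subset_of_mem h2K2 hcov' hY hX (hNX v hv hy) (hNX v hv hy'))
      (fun hv => neighborSet_subset_or_subset_of_mem h2K2 hcov hX hY (hNY v hv hy) (hNY v hv hy'))
  have hφadj : ∀ v, G.Adj v (φ v) := fun v => (hadj_iff v (φ v)).mpr subset_rfl
  have hbij : BijOn φ X Y := bijOn_of_injective_of_mapsTo hφinj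
    (fun x hx => hNX x hx (hφadj x)) (fun y hy => hNY y hy (hφadj y))
  have key : ∀ x ∈ X, ∀ y, G.Adj x y ↔
      ∃ x' ∈ X, G.neighborSet x' ⊆ G.neighborSet x ∧ y = φ x' := by
    refine fun x hx y => ⟨fun hxy => ?_, ?_⟩
    · obtain ⟨x', hx', rfl⟩ := hbij.surjOn (hNX x hx hxy)
      exact ⟨x', hx', fun z hz => ((hadj_iff x' z).mp hz hxy.symm).symm, rfl⟩
    · rintro ⟨x', -, hsub, rfl⟩
      exact hsub (hφadj x')
  refine ⟨X, Y, fun x x' => G.neighborSet x' ⊆ G.neighborSet x, φ, hdis, hcov,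
    ⟨fun _ _ => subset_rfl, fun x _ x' _ h h' => hG.neighborSet_injective (h'.antisymm h),
      fun _ _ _ _ _ _ h h' => h'.trans h,
      fun x hx x' hx' => neighborSet_subset_or_subset_of_mem h2K2 hcov hX hY hx' hx⟩,
    hbij, fun u v => ⟨fun huv => ?_, ?_⟩⟩
  · rcases hmem u with hu | hu
    · obtain ⟨x', hx', hsub, rfl⟩ := (key u hu v).mp huv
      exact ⟨u, hu, x', hx', hsub, Or.inl ⟨rfl, rfl⟩⟩
    · obtain ⟨x', hx', hsub, rfl⟩ := (key v (hNY u hu huv) u).mp huv.symm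
      exact ⟨v, hNY _ hu huv, x', hx', hsub, Or.inr ⟨rfl, rfl⟩⟩
  · rintro ⟨x, hx, x', hx', hsub, ⟨hu, hv⟩ | ⟨hv, hu⟩⟩
    · exact hu ▸ (key x hx v).mpr ⟨x', hx', hsub, hv⟩
    · exact hv ▸ ((key x hx u).mpr ⟨x', hx', hsub, hu⟩).symm

end HalfGraphOfPrime

section HalfGraphCritical

variable {G : SimpleGraph V} {X Y M S : Set V} {r : V → V → Prop} {φ : V → V} {w x y : V}

theorem IsLinearOrderOn.exists_min (hr : IsLinearOrderOn X r) (hSX : S ⊆ X) (hS : S.Finite)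
    (hne : S.Nonempty) : ∃ m ∈ S, ∀ z ∈ S, r m z :=
  exists_forall_rel_of_finite hS hne
    (fun a ha b hb c hc => hr.2.2.1 a (hSX ha) b (hSX hb) c (hSX hc))
    fun a ha b hb => hr.2.2.2 a (hSX ha) b (hSX hb)

theorem IsLinearOrderOn.exists_max (hr : IsLinearOrderOn X r) (hSX : S ⊆ X) (hS : S.Finite)
    (hne : S.Nonempty) : ∃ m ∈ S, ∀ z ∈ S, r z m :=
  exists_forall_rel_of_finite (r := flip r) hS hne
    (fun a ha b hb c hc hab hbc => hr.2.2.1 c (hSX hc) b (hSX hb) a (hSX ha) hbc hab)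
    fun a ha b hb => hr.2.2.2 b (hSX hb) a (hSX ha)

namespace IsHalfGraphWith

theorem isLinearOrderOn (h : IsHalfGraphWith G X Y r φ) : IsLinearOrderOn X r := h.2.2.1

theorem bijOn (h : IsHalfGraphWith G X Y r φ) : BijOn φ X Y := h.2.2.2.1

theorem mem_or_mem (h : IsHalfGraphWith G X Y r φ) (v : V) : v ∈ X ∨ v ∈ Y :=
  (h.2.1.symm ▸ mem_univ v : v ∈ X ∪ Y)

theorem not_adj_left (h : IsHalfGraphWith G X Y r φ) : ∀ u ∈ X, ∀ v ∈ X, ¬ G.Adj u v := by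
  obtain ⟨hdis, -, -, hbij, hadj⟩ := h
  intro u hu v hv huv
  rcases (hadj u v).mp huv with ⟨x, -, x', hx', -, ⟨-, rfl⟩ | ⟨-, rfl⟩⟩
  exacts [hdis.ne_of_mem hv (hbij.1 hx') rfl, hdis.ne_of_mem hu (hbij.1 hx') rfl]

theorem not_adj_right (h : IsHalfGraphWith G X Y r φ) :
    ∀ u ∈ Y, ∀ v ∈ Y, ¬ G.Adj u v := by
  obtain ⟨hdis, -, -, -, hadj⟩ := h
  intro u hu v hv huv
  rcases (hadj u v).mp huv with ⟨x, hx, -, -, -, ⟨rfl, -⟩ | ⟨rfl, -⟩⟩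
  exacts [hdis.ne_of_mem hx hu rfl, hdis.ne_of_mem hx hv rfl]

theorem adj_iff (h : IsHalfGraphWith G X Y r φ) {x x' : V} (hx : x ∈ X) (hx' : x' ∈ X) :
    G.Adj x (φ x') ↔ r x x' := by
  refine ⟨fun hxx' => ?_,
    fun hr => (h.2.2.2.2 x (φ x')).mpr ⟨x, hx, x', hx', hr, Or.inl ⟨rfl, rfl⟩⟩⟩
  obtain ⟨hdis, -, -, hbij, hadj⟩ := h
  rcases (hadj x (φ x')).mp hxx' with ⟨x₀, -, x₁, hx₁, hr, ⟨rfl, he⟩ | ⟨-, rfl⟩⟩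
  · exact hbij.2.1 hx' hx₁ he ▸ hr
  · exact absurd rfl (hdis.ne_of_mem hx (hbij.1 hx₁))

theorem symm [Nonempty V] (h : IsHalfGraphWith G X Y r φ) :
    IsHalfGraphWith G Y X (fun y y' => r (Function.invFunOn φ X y') (Function.invFunOn φ X y))
      (Function.invFunOn φ X) := by
  obtain ⟨hdis, hcov, ⟨hrefl, hanti, htrans, htot⟩, hbij, hadj⟩ := h
  have hinv := hbij.invOn_invFunOn
  have hψ : BijOn (Function.invFunOn φ X) Y X := hbij.symm hinv.symm
  refine ⟨hdis.symm, union_comm Y X ▸ hcov, ⟨fun y hy => hrefl _ (hψ.1 hy),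
    fun y hy y' hy' h h' => hψ.2.1 hy hy' (hanti _ (hψ.1 hy) _ (hψ.1 hy') h' h),
    fun _ h₁ _ h₂ _ h₃ h h' => htrans _ (hψ.1 h₃) _ (hψ.1 h₂) _ (hψ.1 h₁) h' h,
    fun y hy y' hy' => htot _ (hψ.1 hy') _ (hψ.1 hy)⟩, hψ, fun u v => ?_⟩
  rw [hadj u v]
  constructor
  · rintro ⟨x, hx, x', hx', hr, huv⟩
    refine ⟨φ x', hbij.1 hx', φ x, hbij.1 hx,
      by simpa only [hinv.1 hx, hinv.1 hx'] using hr, ?_⟩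
    rw [hinv.1 hx]
    exact huv.symm.imp And.symm And.symm
  · rintro ⟨y, hy, y', hy', hr, huv⟩
    refine ⟨_, hψ.1 hy', _, hψ.1 hy, hr, ?_⟩
    rw [hinv.2 hy]
    exact huv.symm.imp And.symm And.symm

theorem exists_mem_right_of_module (h : IsHalfGraphWith G X Y r φ)
    (hM : GraphIsModuleOn G univ M) (hMn : M.Nontrivial) : ∃ y ∈ Y, y ∈ M := by
  by_contra! hMY
  have hMX : ∀ {z}, z ∈ M → z ∈ X := fun {z} hz =>
    (h.mem_or_mem z).resolve_right fun hzY => hMY z hzY hz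
  -- if `r a b` with `a ≠ b`, then `φ a` separates `a` from `b`
  have key : ∀ a ∈ M, ∀ b ∈ M, a ≠ b → ¬ r a b := fun a ha b hb hab hr => by
    refine hMY (φ a) (h.bijOn.1 (hMX ha)) (hM.mem_of_adj_of_not_adj ha hb (mem_univ _) ?_ ?_)
    · exact ((h.adj_iff (hMX ha) (hMX ha)).mpr (h.isLinearOrderOn.1 a (hMX ha))).symm
    · exact fun hba => hab (h.isLinearOrderOn.2.1 a (hMX ha) b (hMX hb) hr
        ((h.adj_iff (hMX hb) (hMX ha)).mp hba.symm))
  obtain ⟨u, hu, v, hv, huv⟩ := hMn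
  rcases h.isLinearOrderOn.2.2.2 u (hMX hu) v (hMX hv) with hr | hr
  exacts [key u hu v hv huv hr, key v hv u hu huv.symm hr]

theorem left_subset_of_module [Finite V] (h : IsHalfGraphWith G X Y r φ)
    (hM : GraphIsModuleOn G univ M) (hx : x ∈ X) (hxM : x ∈ M) (hy : y ∈ Y) (hyM : y ∈ M) :
    X ⊆ M := by
  obtain ⟨b, hb, rfl⟩ := h.bijOn.2.2 hy
  obtain ⟨m, hm, hmin⟩ := h.isLinearOrderOn.exists_min subset_rfl (toFinite X) ⟨x, hx⟩
  obtain ⟨t, ht, hmax⟩ := h.isLinearOrderOn.exists_max subset_rfl (toFinite X) ⟨x, hx⟩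
  have hmM : m ∈ M := hM.mem_of_adj_of_not_adj hyM hxM (mem_univ m)
    ((h.adj_iff hm hb).mpr (hmin b hb)) (h.not_adj_left m hm x hx)
  have htM : φ t ∈ M := hM.mem_of_adj_of_not_adj hxM hyM (mem_univ _)
    ((h.adj_iff hx ht).mpr (hmax x hx)).symm (h.not_adj_right _ (h.bijOn.1 ht) _ hy)
  exact fun a ha => hM.mem_of_adj_of_not_adj htM hmM (mem_univ a)
    ((h.adj_iff ha ht).mpr (hmax a ha)) (h.not_adj_left a ha m hm)

theorem graphIsPrimeOn [Finite V] (h : IsHalfGraphWith G X Y r φ)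
    (h3 : 3 ≤ (univ : Set V).encard) : GraphIsPrimeOn G univ := by
  have : Nonempty V := nonempty_iff_univ_nonempty.mpr
    (nonempty_of_encard_ne_zero (lt_of_lt_of_le (by norm_num) h3).ne')
  refine graphIsPrimeOn_of_subset_of_module h3 fun M hM hMn v _ => ?_
  obtain ⟨y, hy, hyM⟩ := h.exists_mem_right_of_module hM hMn
  obtain ⟨x, hx, hxM⟩ := h.symm.exists_mem_right_of_module hM hMn
  rcases h.mem_or_mem v with hv | hv
  exacts [h.left_subset_of_module hM hx hxM hy hyM hv,
    h.symm.left_subset_of_module hM hy hyM hx hxM hv]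

theorem not_graphIsPrimeOn_delete_of_mem_left [Finite V] (h : IsHalfGraphWith G X Y r φ)
    (h4 : 4 ≤ (univ : Set V).encard) (hw : w ∈ X) : ¬ GraphIsPrimeOn G (univ \ {w}) := by
  have h3 : 3 ≤ (univ \ {w} : Set V).encard :=
    calc (3 : ℕ∞) = 4 - 1 := rfl
      _ ≤ (univ : Set V).encard - 1 := tsub_le_tsub_right h4 1
      _ ≤ _ := encard_tsub_one_le_encard_sdiff_singleton _ _
  have hlin := h.isLinearOrderOn
  have hbij := h.bijOn
  have hφ : ∀ {a}, a ∈ X → φ a ∈ univ \ {w} :=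
    fun ha => ⟨trivial, (h.1.ne_of_mem hw (hbij.1 ha)).symm⟩
  by_cases hmin : ∀ z ∈ X, r w z
  · -- `φ w` is adjacent to `w` only
    refine not_graphIsPrimeOn_of_isolated h3 (hφ hw) fun v hv hadj => ?_
    rcases h.mem_or_mem v with hvX | hvY
    · exact hv.2 (hlin.2.1 v hvX w hw ((h.adj_iff hvX hw).mp hadj.symm) (hmin v hvX))
    · exact h.not_adj_right _ (hbij.1 hw) v hvY hadj
  · -- `φ q` and `φ w` are twins in `G - w`, where `q` is the predecessor of `w`
    push Not at hmin
    obtain ⟨p, hp, hwp⟩ := hmin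
    obtain ⟨q, ⟨hq, hqw, hqw'⟩, hqmax⟩ :=
      hlin.exists_max (S := {a | a ∈ X ∧ r a w ∧ a ≠ w}) (fun a ha => ha.1) (toFinite _)
      ⟨p, hp, (hlin.2.2.2 p hp w hw).resolve_right hwp, fun hpw => hwp (hpw ▸ hlin.1 p hp)⟩
    refine fun hP => hP.not_graphIsModuleOn_pair (fun he => hqw' (hbij.2.1 hq hw he))
      (graphIsModuleOn_pair (hφ hq) (hφ hw) fun s hs _ _ => ?_)
    rcases h.mem_or_mem s with hsX | hsY
    · rw [h.adj_iff hsX hq, h.adj_iff hsX hw]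
      exact ⟨fun hsq => hlin.2.2.1 s hsX q hq w hw hsq hqw,
        fun hsw => hqmax s ⟨hsX, hsw, hs.2⟩⟩
    · exact iff_of_false (h.not_adj_right s hsY _ (hbij.1 hq))
        (h.not_adj_right s hsY _ (hbij.1 hw))

theorem graphIsCriticalOn [Finite V] (h : IsHalfGraphWith G X Y r φ)
    (h4 : 4 ≤ (univ : Set V).encard) : GraphIsCriticalOn G univ := by
  have : Nonempty V := nonempty_iff_univ_nonempty.mpr
    (nonempty_of_encard_ne_zero (lt_of_lt_of_le (by norm_num) h4).ne')
  refine ⟨h.graphIsPrimeOn (le_trans (by norm_num) h4), fun w _ => ?_⟩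
  rcases h.mem_or_mem w with hw | hw
  exacts [h.not_graphIsPrimeOn_delete_of_mem_left h4 hw,
    h.symm.not_graphIsPrimeOn_delete_of_mem_left h4 hw]

end IsHalfGraphWith

end HalfGraphCritical

/-- Proposition 5.3: for a finite bipartite graph `Γ` on at least 4 vertices,
the following are equivalent: `Γ` is `P₅`-free and prime; `Γ` is critical; `Γ`
is a half graph. -/
theorem statement19 (G : SimpleGraph V) [Finite V] (hbip : IsBipartite G)
    (hcard : 4 ≤ (Set.univ : Set V).encard) :
    ((¬ HasInducedP5On G Set.univ ∧ GraphIsPrimeOn G Set.univ) ↔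
      GraphIsCriticalOn G Set.univ) ∧
    (GraphIsCriticalOn G Set.univ ↔ IsHalfGraph G) := by
  have half_of_prime : ¬ HasInducedP5On G univ → GraphIsPrimeOn G univ → IsHalfGraph G :=
    fun hP5 hG => isHalfGraph_of_graphIsPrimeOn hG hbip fun h2K2 =>
      hP5 (hG.connected.hasInducedP5On_of_hasInducedTwoK2 hbip.not_adj_of_adj_of_adj h2K2)
  have critical_of_half : IsHalfGraph G → GraphIsCriticalOn G univ :=
    fun ⟨_, _, _, _, h⟩ => h.graphIsCriticalOn hcard
  exact ⟨⟨fun h => critical_of_half (half_of_prime h.1 h.2),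
      fun h => ⟨h.not_hasInducedP5On, h.1⟩⟩,
    ⟨fun h => half_of_prime h.not_hasInducedP5On h.1, critical_of_half⟩⟩
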